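/- arXiv:2401.02354 — 3 statements merged into one kernel-verified Lean document; each statement's English description precedes it below -/
import Mathlib

section
/- Let A = ι →₀ ℕ and B = κ →₀ ℕ be transitive finite-rank ℕSet algebras with Frobenius–Perron characters φ_A, φ_B. Suppose ε_A : ι → ℕ and ε_B : κ → ℕ take values ≥ 1 and are such that R_A(i) := φ_A(e_i)/ε_A(i) is a regular element of A and R_B(x) := φ_B(e_x)/ε_B(x) is a regular element of B. Define FPdim(A) := Σ_{i∈ι} φ_A(e_i)²/ε_A(i) and FPdim(B) := Σ_{x∈κ} φ_B(e_x)²/ε_B(x), and let d_A, d_B be positive natural numbers. Let f : (ι →₀ ℕ) → (κ →₀ ℕ) be additive and dominant (for every x ∈ κ there exists a with e_x ≤ f(a)) and suppose there exists D ∈ ι →₀ ℕ with f(a) * f(b) = f(a * D * b) for all a, b. Let g : (κ →₀ ℕ) → (ι →₀ ℕ) be an additive map satisfying the adjointness relation d_A·ε_A(i)·(g(e_x))(i) = d_B·ε_B(x)·(f(e_i))(x) for all i ∈ ι and x ∈ κ. Then for every b ∈ κ →₀ ℕ one has φ_A(g(b)) = φ_A(D)·(d_B/d_A)·(FPdim(A)/FPdim(B))·φ_B(b).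 (In the paper, f and g are induced by a dominant functor F : 𝒜 → ℬ between fusion categories and its left or right adjoint I, d_𝒜 and d_ℬ are the endomorphism degrees, and ε is given by dim_E End of simple objects.) -/
open Finsupp

/-- An ℕSet algebra: an associative multiplication on the free commutative monoid
`ι →₀ ℕ`, additive in each argument, with a two-sided unit. -/
structure NSetAlgebra (ι : Type*) where
  mul : (ι →₀ ℕ) → (ι →₀ ℕ) → (ι →₀ ℕ)
  one : ι →₀ ℕ
  mul_assoc : ∀ a b c, mul (mul a b) c = mul a (mul b c)
  one_mul : ∀ a, mul one a = a
  mul_one : ∀ a, mul a one = a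
  left_distrib : ∀ a b c, mul a (b + c) = mul a b + mul a c
  right_distrib : ∀ a b c, mul (a + b) c = mul a c + mul b c
  zero_mul : ∀ a, mul 0 a = 0
  mul_zero : ∀ a, mul a 0 = 0

namespace NSetAlgebra

variable {ι : Type*}

/-- The structure constants `N(i,j,k) = (e_i * e_j)(k)`. -/
noncomputable def N (A : NSetAlgebra ι) (i j k : ι) : ℕ :=
  A.mul (Finsupp.single i 1) (Finsupp.single j 1) k

/-- Transitivity: for all simple `i, j` there are `u, v` with
`e_j ≤ e_u * e_i` and `e_j ≤ e_i * e_v`. -/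
def Transitive (A : NSetAlgebra ι) : Prop :=
  ∀ i j : ι, (∃ u, Finsupp.single j 1 ≤ A.mul (Finsupp.single u 1) (Finsupp.single i 1)) ∧
             (∃ v, Finsupp.single j 1 ≤ A.mul (Finsupp.single i 1) (Finsupp.single v 1))

/-- A Frobenius–Perron character: additive, multiplicative, unital,
and strictly positive on simple elements. -/
structure IsFPCharacter (A : NSetAlgebra ι) (φ : (ι →₀ ℕ) → ℝ) : Prop where
  map_add : ∀ a b, φ (a + b) = φ a + φ b
  map_mul : ∀ a b, φ (A.mul a b) = φ a * φ b
  map_one : φ A.one = 1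
  pos : ∀ i, 0 < φ (Finsupp.single i 1)

/-- The ℝ-bilinear extension of the multiplication to vectors `ι → ℝ`:
`(r ⋆ s)(k) = ∑ i j, r i * s j * N i j k`. -/
noncomputable def starMul [Fintype ι] (A : NSetAlgebra ι) (r s : ι → ℝ) : ι → ℝ :=
  fun k => ∑ i : ι, ∑ j : ι, r i * s j * (A.N i j k : ℝ)

/-- A fusion semiring structure: an involution `σ` such that for all simples `i, j`,
`j = σ i` iff there is a unique simple `k` with `e_k ≤ 1 ∩ (e_i * e_j)`,
iff there is a unique simple `k` with `e_k ≤ 1 ∩ (e_j * e_i)`. -/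
structure IsFusionSemiring (A : NSetAlgebra ι) (σ : ι → ι) : Prop where
  involutive : ∀ i, σ (σ i) = i
  dual_iff : ∀ i j : ι,
    (∃! k, Finsupp.single k 1 ≤ A.one ∧
        Finsupp.single k 1 ≤ A.mul (Finsupp.single i 1) (Finsupp.single j 1)) ↔ j = σ i
  dual_iff' : ∀ i j : ι,
    (∃! k, Finsupp.single k 1 ≤ A.one ∧
        Finsupp.single k 1 ≤ A.mul (Finsupp.single j 1) (Finsupp.single i 1)) ↔ j = σ i

/-- A regular element: a strictly positive vector `R` with `e_i ⋆ R = φ(e_i) • R`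
for every simple `i`. -/
noncomputable def IsRegular [Fintype ι] (A : NSetAlgebra ι) (φ : (ι →₀ ℕ) → ℝ)
    (R : ι → ℝ) : Prop :=
  (∀ i, 0 < R i) ∧
  ∀ i : ι, A.starMul (fun k => ((Finsupp.single i 1 : ι →₀ ℕ) k : ℝ)) R
    = φ (Finsupp.single i 1) • R

end NSetAlgebra

/-- The real vector underlying an element of `ι →₀ ℕ`. -/
def toRealVec {ι : Type*} (a : ι →₀ ℕ) : ι → ℝ := fun k => (a k : ℝ)

/-- The ℝ-linear extension of an additive map `(ι →₀ ℕ) → (κ →₀ ℕ)` to vectors. -/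
noncomputable def linExt {ι κ : Type*} [Fintype ι]
    (f : (ι →₀ ℕ) → (κ →₀ ℕ)) (r : ι → ℝ) : κ → ℝ :=
  fun x => ∑ i : ι, r i * (f (Finsupp.single i 1) x : ℝ)

/-!
Extend `f` ℝ-linearly. Since `f a * f x = f (a D x)`, the extension intertwines left
multiplication by `a D` in `A` with left multiplication by `f a` in `B`, so the image `S` of the
regular element `R_A` is a positive common eigenvector of all left multiplications by `f a`, with
eigenvalue `φ_A(a) φ_A(D)`. For `a` with `f a ≥ e_x` for every `x` (dominance), transitivity of
`B` makes that left multiplication a strictly positive matrix, so by Perron–Frobenius uniqueness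
`S = t R_B`; pairing both sides with `φ_B` gives `t = φ_A(D) FPdim(A) / FPdim(B)`. Finally the
adjointness relation says `φ_A(g e_x) = (d_B ε_B(x) / d_A) S(x)`.
-/

section AdditiveMaps

variable {ι κ : Type*}

theorem eq_sum_mul_of_map_add [Fintype ι] {h : (ι →₀ ℕ) → ℝ}
    (hadd : ∀ a b, h (a + b) = h a + h b) (a : ι →₀ ℕ) :
    h a = ∑ i, (a i : ℝ) * h (single i 1) := by
  let H : (ι →₀ ℕ) →+ ℝ := AddMonoidHom.mk' h hadd
  calc h a = H (∑ i, single i (a i)) := by rw [Finsupp.univ_sum_single]; rfl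
    _ = ∑ i, (a i : ℝ) * h (single i 1) := by
      rw [map_sum]
      refine Finset.sum_congr rfl fun i _ => ?_
      rw [← Finsupp.smul_single_one, map_nsmul, nsmul_eq_mul]; rfl

theorem toRealVec_eq_linExt [Fintype ι] {f : (ι →₀ ℕ) → (κ →₀ ℕ)}
    (hf : ∀ a b, f (a + b) = f a + f b) (a : ι →₀ ℕ) :
    toRealVec (f a) = linExt f (toRealVec a) := by
  ext x
  exact eq_sum_mul_of_map_add (h := fun u => (f u x : ℝ))
    (fun u v => by rw [hf]; push_cast [Finsupp.add_apply]; rfl) a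

theorem linExt_smul [Fintype ι] (f : (ι →₀ ℕ) → (κ →₀ ℕ)) (t : ℝ) (r : ι → ℝ) :
    linExt f (t • r) = t • linExt f r := by
  ext x
  simp only [linExt, Pi.smul_apply, smul_eq_mul, Finset.mul_sum, mul_assoc]

theorem sum_linExt_mul [Fintype ι] [Fintype κ] (f : (ι →₀ ℕ) → (κ →₀ ℕ))
    {φ : (κ →₀ ℕ) → ℝ} (hφ : ∀ a b, φ (a + b) = φ a + φ b) (r : ι → ℝ) :
    ∑ x, linExt f r x * φ (single x 1) = ∑ i, r i * φ (f (single i 1)) := by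
  simp_rw [linExt, Finset.sum_mul, eq_sum_mul_of_map_add hφ (f _), Finset.mul_sum, mul_assoc]
  exact Finset.sum_comm

theorem linExt_pos [Fintype ι] {f : (ι →₀ ℕ) → (κ →₀ ℕ)} (hf : ∀ a b, f (a + b) = f a + f b)
    {r : ι → ℝ} (hr : ∀ i, 0 < r i) {x : κ} (hx : ∃ a, single x 1 ≤ f a) : 0 < linExt f r x := by
  obtain ⟨a, ha⟩ := hx
  have hfa : (f a x : ℝ) = ∑ i, (a i : ℝ) * f (single i 1) x :=
    congrFun (toRealVec_eq_linExt hf a) x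
  obtain ⟨i, -, hi⟩ : ∃ i ∈ Finset.univ, (a i : ℝ) * f (single i 1) x ≠ 0 := by
    refine Finset.exists_ne_zero_of_sum_ne_zero (hfa ▸ ?_)
    exact_mod_cast (Nat.one_le_iff_ne_zero.mp (Finsupp.single_le_iff.mp ha))
  refine Finset.sum_pos' (fun j _ => mul_nonneg (hr j).le (Nat.cast_nonneg _)) ⟨i, by simp, ?_⟩
  exact mul_pos (hr i) (lt_of_le_of_ne (Nat.cast_nonneg _) (right_ne_zero_of_mul hi).symm)

theorem monotone_of_map_add {f : (ι →₀ ℕ) → (κ →₀ ℕ)} (hf : ∀ a b, f (a + b) = f a + f b) :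
    Monotone f := by
  intro a b hab
  obtain ⟨c, rfl⟩ := exists_add_of_le hab
  rw [hf]
  exact le_self_add

theorem exists_forall_single_le [Fintype κ] {f : (ι →₀ ℕ) → (κ →₀ ℕ)}
    (hf : ∀ a b, f (a + b) = f a + f b) (hdom : ∀ x, ∃ a, single x 1 ≤ f a) :
    ∃ a, ∀ x, single x 1 ≤ f a := by
  choose a ha using hdom
  exact ⟨∑ x, a x, fun x => (ha x).trans <| monotone_of_map_add hf <|
    Finset.single_le_sum (fun _ _ => zero_le) (Finset.mem_univ x)⟩

end AdditiveMaps

namespace Matrix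

variable {n : Type*} [Fintype n] {M : Matrix n n ℝ}

theorem eq_zero_of_mulVec_apply_eq_zero (hM : ∀ i j, 0 < M i j) {u : n → ℝ} (hu : 0 ≤ u) {i : n}
    (h : (M *ᵥ u) i = 0) : u = 0 := by
  ext j
  have hterm := (Finset.sum_eq_zero_iff_of_nonneg fun k _ => mul_nonneg (hM i k).le (hu k)).mp h j
  exact (mul_eq_zero.mp (hterm (Finset.mem_univ j))).resolve_left (hM i j).ne'

theorem exists_smul_le_of_pos [Nonempty n] {v w : n → ℝ} (hv : ∀ i, 0 < v i) (hw : ∀ i, 0 < w i) :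
    ∃ t, 0 < t ∧ ∃ i, t • w ≤ v ∧ v i = t * w i := by
  obtain ⟨i, -, hi⟩ := Finset.exists_min_image Finset.univ (fun j => v j / w j) Finset.univ_nonempty
  refine ⟨v i / w i, div_pos (hv i) (hw i), i, fun j => ?_, (div_mul_cancel₀ _ (hw i).ne').symm⟩
  exact (le_div_iff₀ (hw j)).mp (hi j (Finset.mem_univ j))

theorem le_of_mulVec_eq_smul_of_pos [Nonempty n] (hM : ∀ i j, 0 < M i j) {v w : n → ℝ}
    (hv : ∀ i, 0 < v i) (hw : ∀ i, 0 < w i) {l m : ℝ} (hMv : M *ᵥ v = l • v)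
    (hMw : M *ᵥ w = m • w) : m ≤ l := by
  obtain ⟨t, -, i, hle, hi⟩ := exists_smul_le_of_pos hv hw
  have hMu : 0 ≤ (M *ᵥ (v - t • w)) i :=
    Finset.sum_nonneg fun j _ => mul_nonneg (hM i j).le (sub_nonneg.mpr (hle j))
  rw [mulVec_sub, mulVec_smul, hMv, hMw] at hMu
  simp only [Pi.sub_apply, Pi.smul_apply, smul_eq_mul] at hMu
  have hmv : t * (m * w i) = m * v i := by rw [hi]; ring
  nlinarith [hv i]

/-- Uniqueness part of the Perron–Frobenius theorem. -/
theorem exists_pos_smul_of_mulVec_eq_smul [Nonempty n] (hM : ∀ i j, 0 < M i j) {v w : n → ℝ}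
    (hv : ∀ i, 0 < v i) (hw : ∀ i, 0 < w i) {l m : ℝ} (hMv : M *ᵥ v = l • v)
    (hMw : M *ᵥ w = m • w) : ∃ t : ℝ, 0 < t ∧ v = t • w := by
  have hlm : l = m := le_antisymm (le_of_mulVec_eq_smul_of_pos hM hw hv hMw hMv)
    (le_of_mulVec_eq_smul_of_pos hM hv hw hMv hMw)
  obtain ⟨t, ht, i, hle, hi⟩ := exists_smul_le_of_pos hv hw
  refine ⟨t, ht, sub_eq_zero.mp <|
    eq_zero_of_mulVec_apply_eq_zero hM (sub_nonneg.mpr hle) (i := i) ?_⟩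
  rw [mulVec_sub, mulVec_smul, hMv, hMw, hlm]
  simp [hi, mul_left_comm]

end Matrix

namespace NSetAlgebra

open scoped Matrix

variable {ι : Type*} [Fintype ι] (A : NSetAlgebra ι)

noncomputable def leftMulMatrix (r : ι → ℝ) : Matrix ι ι ℝ :=
  Matrix.of fun k j => ∑ i, r i * A.N i j k

theorem starMul_eq_mulVec (r s : ι → ℝ) : A.starMul r s = A.leftMulMatrix r *ᵥ s := by
  ext k
  simp only [starMul, leftMulMatrix, Matrix.mulVec, dotProduct, Matrix.of_apply, Finset.sum_mul]
  rw [Finset.sum_comm]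
  exact Finset.sum_congr rfl fun _ _ => Finset.sum_congr rfl fun _ _ => by ring

theorem starMul_smul_right (r s : ι → ℝ) (t : ℝ) : A.starMul r (t • s) = t • A.starMul r s := by
  rw [starMul_eq_mulVec, starMul_eq_mulVec, Matrix.mulVec_smul]

theorem starMul_single_left_apply (i : ι) (s : ι → ℝ) (k : ι) :
    A.starMul (toRealVec (single i 1)) s k = ∑ j, s j * A.N i j k := by
  rw [starMul, Fintype.sum_eq_single i fun i' hi' => by simp [toRealVec, hi'.symm]]
  simp [toRealVec, mul_comm]

theorem mul_single_apply (a : ι →₀ ℕ) (j k : ι) :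
    (A.mul a (single j 1) k : ℝ) = ∑ i, (a i : ℝ) * A.N i j k :=
  eq_sum_mul_of_map_add (h := fun u => (A.mul u (single j 1) k : ℝ))
    (fun u v => by rw [A.right_distrib]; push_cast [Finsupp.add_apply]; rfl) a

theorem toRealVec_mul (a b : ι →₀ ℕ) :
    toRealVec (A.mul a b) = A.starMul (toRealVec a) (toRealVec b) := by
  ext k
  have hright : ∀ u, (A.mul u b k : ℝ) = ∑ j, (b j : ℝ) * A.mul u (single j 1) k := fun u =>
    eq_sum_mul_of_map_add (h := fun v => (A.mul u v k : ℝ))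
      (fun v w => by rw [A.left_distrib]; push_cast [Finsupp.add_apply]; rfl) b
  simp only [toRealVec, starMul, hright, mul_single_apply, Finset.mul_sum]
  rw [Finset.sum_comm]
  exact Finset.sum_congr rfl fun _ _ => Finset.sum_congr rfl fun _ _ => by ring

theorem starMul_toRealVec_apply (c : ι →₀ ℕ) (s : ι → ℝ) (k : ι) :
    A.starMul (toRealVec c) s k = ∑ l, s l * A.mul c (single l 1) k := by
  simp only [starMul, toRealVec, mul_single_apply, Finset.mul_sum]
  rw [Finset.sum_comm]
  exact Finset.sum_congr rfl fun _ _ => Finset.sum_congr rfl fun _ _ => by ring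

variable {A}

theorem IsRegular.starMul_eq {φ : (ι →₀ ℕ) → ℝ} {R : ι → ℝ} (hR : A.IsRegular φ R)
    (hφ : ∀ a b, φ (a + b) = φ a + φ b) (c : ι →₀ ℕ) :
    A.starMul (toRealVec c) R = φ c • R := by
  ext k
  have hrow : ∀ i, ∑ j, R j * A.N i j k = φ (single i 1) * R k := fun i => by
    rw [← starMul_single_left_apply]; exact congrFun (hR.2 i) k
  simp only [starMul, toRealVec, Pi.smul_apply, smul_eq_mul, eq_sum_mul_of_map_add hφ c,
    Finset.sum_mul]
  refine Finset.sum_congr rfl fun i _ => ?_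
  rw [_root_.mul_assoc, ← hrow, Finset.mul_sum]
  simp only [_root_.mul_assoc]

theorem IsRegular.smul {φ : (ι →₀ ℕ) → ℝ} {R : ι → ℝ} (hR : A.IsRegular φ R) {t : ℝ}
    (ht : 0 < t) : A.IsRegular φ (t • R) :=
  ⟨fun i => mul_pos ht (hR.1 i), fun i => by
    rw [starMul_smul_right, hR.2 i, smul_comm]⟩

theorem leftMulMatrix_pos (hA : A.Transitive) {b : ι →₀ ℕ} (hb : ∀ i, single i 1 ≤ b)
    (k j : ι) : 0 < A.leftMulMatrix (toRealVec b) k j := by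
  obtain ⟨u, hu⟩ := (hA j k).1
  have hbu : (1 : ℝ) ≤ b u := by exact_mod_cast Finsupp.single_le_iff.mp (hb u)
  have hN : (1 : ℝ) ≤ A.N u j k := by exact_mod_cast Finsupp.single_le_iff.mp hu
  exact Finset.sum_pos' (fun _ _ => mul_nonneg (Nat.cast_nonneg _) (Nat.cast_nonneg _))
    ⟨u, Finset.mem_univ u, mul_pos (one_pos.trans_le hbu) (one_pos.trans_le hN)⟩

end NSetAlgebra

section DominantMaps

open scoped Matrix

variable {ι κ : Type*} [Fintype ι] [Fintype κ] {A : NSetAlgebra ι} {B : NSetAlgebra κ}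
  {f : (ι →₀ ℕ) → (κ →₀ ℕ)}

theorem starMul_linExt (hf : ∀ a b, f (a + b) = f a + f b) {b : κ →₀ ℕ} {c : ι →₀ ℕ}
    (hbc : ∀ x, B.mul b (f x) = f (A.mul c x)) (s : ι → ℝ) :
    B.starMul (toRealVec b) (linExt f s) = linExt f (A.starMul (toRealVec c) s) := by
  ext y
  have hlhs : ∀ l, ∑ x, (f (single l 1) x : ℝ) * B.mul b (single x 1) y =
      f (A.mul c (single l 1)) y := fun l => by
    rw [← hbc]
    exact (eq_sum_mul_of_map_add (h := fun u => (B.mul b u y : ℝ))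
      (fun u v => by rw [B.left_distrib]; push_cast [Finsupp.add_apply]; rfl) _).symm
  have hrhs : ∀ l, ∑ j, (A.mul c (single l 1) j : ℝ) * f (single j 1) y =
      f (A.mul c (single l 1)) y := fun l => (congrFun (toRealVec_eq_linExt hf _) y).symm
  simp only [NSetAlgebra.starMul_toRealVec_apply, linExt, Finset.sum_mul]
  rw [Finset.sum_comm]
  conv_rhs => rw [Finset.sum_comm]
  refine Finset.sum_congr rfl fun l _ => ?_
  simp only [mul_assoc, ← Finset.mul_sum, hlhs, hrhs]

variable {φA : (ι →₀ ℕ) → ℝ} {φB : (κ →₀ ℕ) → ℝ} {RA : ι → ℝ} {RB : κ → ℝ} {D : ι →₀ ℕ}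

theorem starMul_linExt_of_isRegular (hφA : A.IsFPCharacter φA) (hRA : A.IsRegular φA RA)
    (hf : ∀ a b, f (a + b) = f a + f b) (hD : ∀ a b, B.mul (f a) (f b) = f (A.mul (A.mul a D) b))
    (a : ι →₀ ℕ) :
    B.starMul (toRealVec (f a)) (linExt f RA) = (φA a * φA D) • linExt f RA := by
  rw [starMul_linExt hf (hD a), hRA.starMul_eq hφA.map_add, linExt_smul, hφA.map_mul]

theorem exists_linExt_eq_pos_smul [Nonempty κ] (hB : B.Transitive) (hφA : A.IsFPCharacter φA)
    (hφB : ∀ a b, φB (a + b) = φB a + φB b) (hRA : A.IsRegular φA RA) (hRB : B.IsRegular φB RB)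
    (hf : ∀ a b, f (a + b) = f a + f b) (hdom : ∀ x, ∃ a, single x 1 ≤ f a)
    (hD : ∀ a b, B.mul (f a) (f b) = f (A.mul (A.mul a D) b)) :
    ∃ t : ℝ, 0 < t ∧ linExt f RA = t • RB := by
  obtain ⟨a, ha⟩ := exists_forall_single_le hf hdom
  have hS : B.leftMulMatrix (toRealVec (f a)) *ᵥ linExt f RA = (φA a * φA D) • linExt f RA := by
    rw [← B.starMul_eq_mulVec]
    exact starMul_linExt_of_isRegular hφA hRA hf hD a
  have hR : B.leftMulMatrix (toRealVec (f a)) *ᵥ RB = φB (f a) • RB := by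
    rw [← B.starMul_eq_mulVec]
    exact hRB.starMul_eq hφB _
  exact Matrix.exists_pos_smul_of_mulVec_eq_smul (B.leftMulMatrix_pos hB ha)
    (fun x => linExt_pos hf hRA.1 (hdom x)) hRB.1 hS hR

theorem map_comp_eq_mul [Nonempty κ] (hB : B.Transitive) (hφA : A.IsFPCharacter φA)
    (hφB : ∀ a b, φB (a + b) = φB a + φB b) (hRA : A.IsRegular φA RA) (hRB : B.IsRegular φB RB)
    (hf : ∀ a b, f (a + b) = f a + f b) (hdom : ∀ x, ∃ a, single x 1 ≤ f a)
    (hD : ∀ a b, B.mul (f a) (f b) = f (A.mul (A.mul a D) b)) (a : ι →₀ ℕ) :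
    φB (f a) = φA a * φA D := by
  obtain ⟨t, ht, hS⟩ := exists_linExt_eq_pos_smul hB hφA hφB hRA hRB hf hdom hD
  have hSreg : B.IsRegular φB (linExt f RA) := hS ▸ hRB.smul ht
  obtain ⟨x⟩ := ‹Nonempty κ›
  have hx := congrFun ((hSreg.starMul_eq hφB (f a)).symm.trans
    (starMul_linExt_of_isRegular hφA hRA hf hD a)) x
  exact mul_right_cancel₀ (hSreg.1 x).ne' hx

theorem linExt_eq_smul [Nonempty κ] (hB : B.Transitive) (hφA : A.IsFPCharacter φA)
    (hφB : B.IsFPCharacter φB) (hRA : A.IsRegular φA RA) (hRB : B.IsRegular φB RB)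
    (hf : ∀ a b, f (a + b) = f a + f b) (hdom : ∀ x, ∃ a, single x 1 ≤ f a)
    (hD : ∀ a b, B.mul (f a) (f b) = f (A.mul (A.mul a D) b)) :
    linExt f RA = ((φA D * ∑ i, RA i * φA (single i 1)) / ∑ x, RB x * φB (single x 1)) • RB := by
  obtain ⟨t, -, hS⟩ := exists_linExt_eq_pos_smul hB hφA hφB.map_add hRA hRB hf hdom hD
  have hpair : t * ∑ x, RB x * φB (single x 1) = φA D * ∑ i, RA i * φA (single i 1) :=
    calc t * ∑ x, RB x * φB (single x 1) = ∑ x, linExt f RA x * φB (single x 1) := by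
          simp [hS, Finset.mul_sum, mul_assoc]
      _ = ∑ i, RA i * φB (f (single i 1)) := sum_linExt_mul f hφB.map_add RA
      _ = φA D * ∑ i, RA i * φA (single i 1) := by
          simp only [map_comp_eq_mul hB hφA hφB.map_add hRA hRB hf hdom hD, Finset.mul_sum]
          exact Finset.sum_congr rfl fun i _ => by ring
  have hpos : 0 < ∑ x, RB x * φB (single x 1) :=
    Finset.sum_pos (fun x _ => mul_pos (hRB.1 x) (hφB.pos x)) Finset.univ_nonempty
  rw [hS, ← hpair, mul_div_cancel_right₀ _ hpos.ne']

end DominantMaps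

theorem map_single_of_adjoint {ι κ : Type*} [Fintype ι] {φ : (ι →₀ ℕ) → ℝ}
    (hφ : ∀ a b, φ (a + b) = φ a + φ b) {εA : ι → ℕ} (εB : κ → ℕ) (hεA : ∀ i, εA i ≠ 0)
    {dA : ℕ} (dB : ℕ) (hdA : dA ≠ 0) {f : (ι →₀ ℕ) → (κ →₀ ℕ)} {g : (κ →₀ ℕ) → (ι →₀ ℕ)}
    (hadj : ∀ i x, dA * εA i * g (single x 1) i = dB * εB x * f (single i 1) x) (x : κ) :
    φ (g (single x 1)) =
      dB * εB x / dA * linExt f (fun i => φ (single i 1) / εA i) x := by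
  rw [eq_sum_mul_of_map_add hφ, linExt, Finset.mul_sum]
  refine Finset.sum_congr rfl fun i _ => ?_
  have h : (dA * εA i * g (single x 1) i : ℝ) = dB * εB x * f (single i 1) x := by
    exact_mod_cast hadj i x
  have hεAi : (εA i : ℝ) ≠ 0 := Nat.cast_ne_zero.mpr (hεA i)
  have hdA' : (dA : ℝ) ≠ 0 := Nat.cast_ne_zero.mpr hdA
  field_simp
  linear_combination φ (single i 1) * h

open NSetAlgebra in
theorem stmt2_general {ι κ : Type*} [Fintype ι] [Fintype κ] [Nonempty κ]
    (A : NSetAlgebra ι) (B : NSetAlgebra κ) (hB : B.Transitive)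
    (φA : (ι →₀ ℕ) → ℝ) (φB : (κ →₀ ℕ) → ℝ)
    (hφA : A.IsFPCharacter φA) (hφB : B.IsFPCharacter φB)
    (εA : ι → ℕ) (εB : κ → ℕ) (hεA : ∀ i, 1 ≤ εA i) (hεB : ∀ x, 1 ≤ εB x)
    (hRA : A.IsRegular φA (fun i => φA (Finsupp.single i 1) / (εA i : ℝ)))
    (hRB : B.IsRegular φB (fun x => φB (Finsupp.single x 1) / (εB x : ℝ)))
    (dA dB : ℕ) (hdA : 0 < dA)
    (f : (ι →₀ ℕ) → (κ →₀ ℕ))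
    (haddf : ∀ a b, f (a + b) = f a + f b)
    (hdom : ∀ x : κ, ∃ a, Finsupp.single x 1 ≤ f a)
    (D : ι →₀ ℕ)
    (hD : ∀ a b, B.mul (f a) (f b) = f (A.mul (A.mul a D) b))
    (g : (κ →₀ ℕ) → (ι →₀ ℕ))
    (haddg : ∀ a b, g (a + b) = g a + g b)
    (hadj : ∀ (i : ι) (x : κ),
      dA * εA i * g (Finsupp.single x 1) i = dB * εB x * f (Finsupp.single i 1) x) :
    ∀ b : κ →₀ ℕ, φA (g b) =
      φA D * ((dB : ℝ) / (dA : ℝ)) *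
        ((∑ i : ι, φA (Finsupp.single i 1) ^ 2 / (εA i : ℝ)) /
          (∑ x : κ, φB (Finsupp.single x 1) ^ 2 / (εB x : ℝ))) * φB b := by
  intro b
  have hS := linExt_eq_smul hB hφA hφB hRA hRB haddf hdom hD
  simp only [div_mul_eq_mul_div, ← sq] at hS
  rw [eq_sum_mul_of_map_add (h := fun u => φA (g u)) (fun u v => by rw [haddg, hφA.map_add]) b,
    eq_sum_mul_of_map_add hφB.map_add b, Finset.mul_sum]
  refine Finset.sum_congr rfl fun x _ => ?_
  rw [map_single_of_adjoint hφA.map_add εB (fun i => Nat.one_le_iff_ne_zero.mp (hεA i)) dB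
    hdA.ne' hadj x, hS]
  have hεBx : (εB x : ℝ) ≠ 0 := Nat.cast_ne_zero.mpr (Nat.one_le_iff_ne_zero.mp (hεB x))
  simp only [Pi.smul_apply, smul_eq_mul]
  field_simp

open NSetAlgebra in
/-- FPdims of adjoints: if `f` is dominant with `f(a)f(b) = f(aDb)` and `g` satisfies the
adjointness relation, then `φ_A(g(b)) = φ_A(D)·(d_B/d_A)·(FPdim A / FPdim B)·φ_B(b)`. -/
theorem stmt2 {ι κ : Type*} [Fintype ι] [Nonempty ι] [Fintype κ] [Nonempty κ]
    (A : NSetAlgebra ι) (B : NSetAlgebra κ) (hA : A.Transitive) (hB : B.Transitive)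
    (φA : (ι →₀ ℕ) → ℝ) (φB : (κ →₀ ℕ) → ℝ)
    (hφA : A.IsFPCharacter φA) (hφB : B.IsFPCharacter φB)
    (εA : ι → ℕ) (εB : κ → ℕ) (hεA : ∀ i, 1 ≤ εA i) (hεB : ∀ x, 1 ≤ εB x)
    (hRA : A.IsRegular φA (fun i => φA (Finsupp.single i 1) / (εA i : ℝ)))
    (hRB : B.IsRegular φB (fun x => φB (Finsupp.single x 1) / (εB x : ℝ)))
    (dA dB : ℕ) (hdA : 0 < dA) (hdB : 0 < dB)
    (f : (ι →₀ ℕ) → (κ →₀ ℕ))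
    (haddf : ∀ a b, f (a + b) = f a + f b)
    (hdom : ∀ x : κ, ∃ a, Finsupp.single x 1 ≤ f a)
    (D : ι →₀ ℕ)
    (hD : ∀ a b, B.mul (f a) (f b) = f (A.mul (A.mul a D) b))
    (g : (κ →₀ ℕ) → (ι →₀ ℕ))
    (haddg : ∀ a b, g (a + b) = g a + g b)
    (hadj : ∀ (i : ι) (x : κ),
      dA * εA i * g (Finsupp.single x 1) i = dB * εB x * f (Finsupp.single i 1) x) :
    ∀ b : κ →₀ ℕ, φA (g b) =
      φA D * ((dB : ℝ) / (dA : ℝ)) *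
        ((∑ i : ι, φA (Finsupp.single i 1) ^ 2 / (εA i : ℝ)) /
          (∑ x : κ, φB (Finsupp.single x 1) ^ 2 / (εB x : ℝ))) * φB b :=
  stmt2_general A B hB φA φB hφA hφB εA εB hεA hεB hRA hRB dA dB hdA f haddf hdom D hD g haddg hadj
end

section
/- Let A = ι →₀ ℕ be a transitive finite-rank ℕSet algebra with Frobenius–Perron character φ, and let i ∈ ι. Then: (1) d := φ(e_i) is an algebraic integer (integral over ℤ), and every complex root z of the minimal polynomial of d over ℚ satisfies |z| ≤ d; and (2) φ(e_i) ≥ 1. -/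
open Finsupp

/-!
The matrix `N_i = (N(i,j,k))_{j,k}` of left multiplication by `e_i` has nonnegative integer entries,
and multiplicativity of `φ` says exactly that the positive vector `v = (φ(e_k))_k` is an eigenvector
of `N_i` with eigenvalue `d = φ(e_i)`. Hence `d` is a root of the monic integer polynomial
`charpoly N_i`, so it is an algebraic integer, and every conjugate `z` of `d` is a complex eigenvalue
of `N_i`; comparing an eigenvector `w` with `v` at the index where `|w_j| / v_j` is maximal gives
`|z| ≤ d`. Finally transitivity makes every column of `N_i` nonzero, and summing the eigenvalue
equation over all indices gives `d · ∑ v ≥ ∑ v`, i.e. `d ≥ 1`.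
-/

open Polynomial Matrix

namespace Matrix

section Charpoly

variable {n : Type*} [Fintype n] [DecidableEq n]

theorem isRoot_charpoly_iff_exists_mulVec_eq_smul {K : Type*} [Field K] (B : Matrix n n K)
    (μ : K) : B.charpoly.IsRoot μ ↔ ∃ w ≠ 0, B *ᵥ w = μ • w := by
  rw [← charpoly_toLin', ← Module.End.hasEigenvalue_iff_isRoot_charpoly,
    Module.End.hasEigenvalue_iff, Submodule.ne_bot_iff]
  simp only [Module.End.mem_eigenspace_iff, toLin'_apply]
  exact ⟨fun ⟨w, hw, hw0⟩ => ⟨w, hw0, hw⟩, fun ⟨w, hw0, hw⟩ => ⟨w, hw, hw0⟩⟩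

theorem aeval_charpoly_eq_zero_iff {R K : Type*} [CommRing R] [Field K] [Algebra R K]
    (M : Matrix n n R) (μ : K) :
    aeval μ M.charpoly = 0 ↔ ∃ w ≠ 0, M.map (algebraMap R K) *ᵥ w = μ • w := by
  rw [aeval_def, eval₂_eq_eval_map, ← charpoly_map, ← IsRoot.def,
    isRoot_charpoly_iff_exists_mulVec_eq_smul]

end Charpoly

section PositiveEigenvector

variable {n : Type*} [Fintype n] {B : Matrix n n ℝ} {v : n → ℝ} {d : ℝ}

theorem norm_le_of_mulVec_eq_smul_of_pos (hB : ∀ j k, 0 ≤ B j k) (hv : ∀ k, 0 < v k)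
    (hBv : B *ᵥ v = d • v) {z : ℂ} {w : n → ℂ} (hw0 : w ≠ 0)
    (hBw : B.map (algebraMap ℝ ℂ) *ᵥ w = z • w) : ‖z‖ ≤ d := by
  obtain ⟨k₀, hk₀⟩ := Function.ne_iff.1 hw0
  obtain ⟨j, -, hj⟩ := Finset.exists_max_image Finset.univ (fun k => ‖w k‖ / v k)
    ⟨k₀, Finset.mem_univ k₀⟩
  set c := ‖w j‖ / v j
  have hwc : ∀ k, ‖w k‖ ≤ c * v k := fun k =>
    (div_le_iff₀ (hv k)).1 (hj k (Finset.mem_univ k))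
  have hwj : ‖w j‖ = c * v j := (div_mul_cancel₀ _ (hv j).ne').symm
  have hc : 0 < c :=
    (div_pos (norm_pos_iff.2 hk₀) (hv k₀)).trans_le (hj k₀ (Finset.mem_univ k₀))
  have key : ‖z‖ * (c * v j) ≤ d * (c * v j) := by
    calc ‖z‖ * (c * v j) = ‖∑ k, (B j k : ℂ) * w k‖ := by
          rw [← hwj, ← norm_mul, ← smul_eq_mul, ← Pi.smul_apply, ← hBw]
          rfl
      _ ≤ ∑ k, B j k * ‖w k‖ := by
          refine (norm_sum_le _ _).trans_eq (Finset.sum_congr rfl fun k _ => ?_)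
          rw [norm_mul, Complex.norm_real, Real.norm_of_nonneg (hB j k)]
      _ ≤ ∑ k, B j k * (c * v k) :=
          Finset.sum_le_sum fun k _ => mul_le_mul_of_nonneg_left (hwc k) (hB j k)
      _ = c * (B *ᵥ v) j := by
          simp only [mulVec, dotProduct, Finset.mul_sum]
          exact Finset.sum_congr rfl fun k _ => by ring
      _ = d * (c * v j) := by rw [hBv, Pi.smul_apply, smul_eq_mul]; ring
  exact le_of_mul_le_mul_right key (mul_pos hc (hv j))

theorem one_le_of_mulVec_eq_smul_of_pos [Nonempty n] (hcol : ∀ k, 1 ≤ ∑ j, B j k)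
    (hv : ∀ k, 0 < v k) (hBv : B *ᵥ v = d • v) : 1 ≤ d := by
  have hsum : 0 < ∑ k, v k := Finset.sum_pos (fun k _ => hv k) Finset.univ_nonempty
  have key : ∑ k, v k ≤ d * ∑ k, v k :=
    calc ∑ k, v k ≤ ∑ k, (∑ j, B j k) * v k :=
          Finset.sum_le_sum fun k _ => le_mul_of_one_le_left (hv k).le (hcol k)
      _ = ∑ j, (B *ᵥ v) j := by
          simp only [mulVec, dotProduct, Finset.sum_mul]
          exact Finset.sum_comm
      _ = d * ∑ k, v k := by simp only [hBv, Pi.smul_apply, smul_eq_mul, Finset.mul_sum]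
  exact le_of_mul_le_mul_right (by linarith) hsum

end PositiveEigenvector

end Matrix

namespace NSetAlgebra

variable {ι : Type*} {A : NSetAlgebra ι}

noncomputable def fusionMatrix (A : NSetAlgebra ι) (i : ι) : Matrix ι ι ℤ :=
  Matrix.of fun j k => (A.N i j k : ℤ)

theorem fusionMatrix_map_apply {R : Type*} [CommRing R] (i j k : ι) :
    (A.fusionMatrix i).map (algebraMap ℤ R) j k = A.N i j k := by
  simp [fusionMatrix]

variable [Fintype ι]

theorem Transitive.one_le_sum_fusionMatrix (hA : A.Transitive) (i k : ι) :
    1 ≤ ∑ j, (A.fusionMatrix i).map (algebraMap ℤ ℝ) j k := by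
  obtain ⟨u, hu⟩ := (hA i k).2
  have hNu : 1 ≤ A.N i u k := by simpa [N] using hu k
  simp only [fusionMatrix_map_apply]
  calc (1 : ℝ) ≤ A.N i u k := by exact_mod_cast hNu
    _ ≤ ∑ j, (A.N i j k : ℝ) :=
      Finset.single_le_sum (f := fun j => (A.N i j k : ℝ)) (fun j _ => Nat.cast_nonneg _)
        (Finset.mem_univ u)

variable {φ : (ι →₀ ℕ) → ℝ}

theorem IsFPCharacter.apply_eq_sum (hφ : A.IsFPCharacter φ) (a : ι →₀ ℕ) :
    φ a = ∑ k, (a k : ℝ) * φ (Finsupp.single k 1) := by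
  let f : (ι →₀ ℕ) →+ ℝ := AddMonoidHom.mk' φ hφ.map_add
  calc φ a = f (∑ k, a k • Finsupp.single k 1) := by
        simp only [Finsupp.smul_single_one, Finsupp.univ_sum_single]; rfl
    _ = ∑ k, (a k : ℝ) * φ (Finsupp.single k 1) := by
        simp only [map_sum, map_nsmul, nsmul_eq_mul]; rfl

theorem IsFPCharacter.fusionMatrix_mulVec (hφ : A.IsFPCharacter φ) (i : ι) :
    (A.fusionMatrix i).map (algebraMap ℤ ℝ) *ᵥ (fun k => φ (Finsupp.single k 1)) =
      φ (Finsupp.single i 1) • fun k => φ (Finsupp.single k 1) := by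
  ext j
  rw [Pi.smul_apply, smul_eq_mul, ← hφ.map_mul, hφ.apply_eq_sum]
  simp only [Matrix.mulVec, dotProduct, fusionMatrix_map_apply, N]

end NSetAlgebra

open NSetAlgebra in
/-- For a simple element `e_i`: (1) `d = φ(e_i)` is an algebraic integer all of whose
algebraic conjugates `z` satisfy `|z| ≤ d`; and (2) `φ(e_i) ≥ 1`. -/
theorem stmt11 {ι : Type*} [Fintype ι] [Nonempty ι]
    (A : NSetAlgebra ι) (hA : A.Transitive)
    (φ : (ι →₀ ℕ) → ℝ) (hφ : A.IsFPCharacter φ) (i : ι) :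
    (IsIntegral ℤ (φ (Finsupp.single i 1)) ∧
      ∀ z : ℂ, Polynomial.aeval z (minpoly ℚ (φ (Finsupp.single i 1))) = 0 →
        ‖z‖ ≤ φ (Finsupp.single i 1)) ∧
    1 ≤ φ (Finsupp.single i 1) := by
  classical
  set d := φ (Finsupp.single i 1)
  set v : ι → ℝ := fun k => φ (Finsupp.single k 1)
  have hv : ∀ k, 0 < v k := hφ.pos
  have hv0 : v ≠ 0 := fun h => (hv (Classical.arbitrary ι)).ne' (congrFun h _)
  have hev := hφ.fusionMatrix_mulVec i
  have hroot : aeval d (A.fusionMatrix i).charpoly = 0 :=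
    (Matrix.aeval_charpoly_eq_zero_iff _ d).2 ⟨v, hv0, hev⟩
  refine ⟨⟨⟨_, Matrix.charpoly_monic _, hroot⟩, fun z hz => ?_⟩,
    Matrix.one_le_of_mulVec_eq_smul_of_pos (hA.one_le_sum_fusionMatrix i) hv hev⟩
  have hzroot : aeval z (A.fusionMatrix i).charpoly = 0 := by
    rw [← aeval_map_algebraMap ℚ]
    exact aeval_eq_zero_of_dvd_aeval_eq_zero (minpoly.dvd ℚ d (by rwa [aeval_map_algebraMap])) hz
  obtain ⟨w, hw0, hw⟩ := (Matrix.aeval_charpoly_eq_zero_iff _ z).1 hzroot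
  refine Matrix.norm_le_of_mulVec_eq_smul_of_pos (fun j k => ?_) hv hev hw0 ?_
  · rw [fusionMatrix_map_apply]; positivity
  · rwa [Matrix.map_map, ← RingHom.coe_comp, ← IsScalarTower.algebraMap_eq]
end

section
/- Let A = ι →₀ ℕ be a transitive finite-rank ℕSet algebra that is a fusion semiring with involution σ, and let φ be its Frobenius–Perron character. For a simple element g = e_i one has φ(e_i) = 1 if and only if e_i is invertible, i.e., e_i * e_{σ(i)} = 1 and e_{σ(i)} * e_i = 1. -/
open Finsupp

/-!
Any additive `φ` on `ι →₀ ℕ` that is positive on simple elements is strictly monotone for the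
pointwise order. Transitivity gives `S ≤ e_i * S` for `S = ∑ j, e_j`, hence `φ(e_i) ≥ 1` for
every simple `e_i`; so `e_i * e_{σ i} = 1` forces `φ(e_i) = 1`. Conversely, if `φ(e_i) = 1` then
`S ≤ e_i * S` with equal `φ`-values, so `e_i * S = S`; counting simple constituents, each of the
nonzero products `e_i * e_j` is simple, and `e_i * e_{σ i}` is the simple constituent of `1`
that the fusion axiom puts inside it. The other product is handled in the opposite algebra.
-/

namespace Finsupp

variable {ι M : Type*}

theorem eq_of_le_of_map_eq [AddCommMonoid M] [IsLeftCancelAdd M] (f : (ι →₀ ℕ) →+ M)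
    (hf : ∀ c, f c = 0 → c = 0) {a b : ι →₀ ℕ} (hab : a ≤ b) (h : f a = f b) : a = b := by
  have hdiff : f (b - a) = 0 := by
    have hsplit := map_add f a (b - a)
    rw [add_tsub_cancel_of_le hab, h] at hsplit
    exact left_eq_add.mp hsplit
  exact le_antisymm hab (tsub_eq_zero_iff_le.mp (hf _ hdiff))

theorem map_eq_weight [Fintype ι] [AddCommMonoid M] (f : (ι →₀ ℕ) →+ M) (c : ι →₀ ℕ) :
    f c = weight (fun k => f (single k 1)) c := by
  conv_lhs => rw [← univ_sum_single c]
  rw [map_sum, weight_eq_sum]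
  exact Finset.sum_congr rfl fun k _ => by rw [← smul_single_one, map_nsmul]

end Finsupp

namespace NSetAlgebra

variable {ι : Type*}

def op (A : NSetAlgebra ι) : NSetAlgebra ι where
  mul a b := A.mul b a
  one := A.one
  mul_assoc a b c := (A.mul_assoc c b a).symm
  one_mul := A.mul_one
  mul_one := A.one_mul
  left_distrib a b c := A.right_distrib b c a
  right_distrib a b c := A.left_distrib c a b
  zero_mul := A.mul_zero
  mul_zero := A.zero_mul

theorem Transitive.op {A : NSetAlgebra ι} (hA : A.Transitive) : A.op.Transitive :=
  fun i j => ⟨(hA i j).2, (hA i j).1⟩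

theorem mul_sum {κ : Type*} (A : NSetAlgebra ι) (a : ι →₀ ℕ) (s : Finset κ)
    (f : κ → ι →₀ ℕ) : A.mul a (∑ k ∈ s, f k) = ∑ k ∈ s, A.mul a (f k) :=
  map_sum (⟨⟨A.mul a, A.mul_zero a⟩, A.left_distrib a⟩ : (ι →₀ ℕ) →+ (ι →₀ ℕ)) f s

theorem Transitive.sum_single_le_mul [Fintype ι] {A : NSetAlgebra ι} (hA : A.Transitive)
    (i : ι) : ∑ j, single j 1 ≤ A.mul (single i 1) (∑ j, single j 1) := by
  rw [A.mul_sum, Finsupp.le_def]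
  intro k
  obtain ⟨v, hv⟩ := (hA i k).2
  rw [Finsupp.finsetSum_apply, Finsupp.finsetSum_apply, Finsupp.univ_sum_single_apply']
  exact (Finsupp.single_le_iff.mp hv).trans
    (Finset.single_le_sum (f := fun j => A.mul (single i 1) (single j 1) k)
      (fun _ _ => Nat.zero_le _) (Finset.mem_univ v))

namespace IsFPCharacter

variable {A : NSetAlgebra ι} {φ : (ι →₀ ℕ) → ℝ}

theorem op (hφ : A.IsFPCharacter φ) : A.op.IsFPCharacter φ where
  map_add := hφ.map_add
  map_mul a b := (hφ.map_mul b a).trans (mul_comm _ _)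
  map_one := hφ.map_one
  pos := hφ.pos

noncomputable def toAddMonoidHom (hφ : A.IsFPCharacter φ) : (ι →₀ ℕ) →+ ℝ :=
  AddMonoidHom.mk' φ hφ.map_add

theorem map_zero (hφ : A.IsFPCharacter φ) : φ 0 = 0 :=
  _root_.map_zero hφ.toAddMonoidHom

theorem mul_single_ne_zero (hφ : A.IsFPCharacter φ) (i j : ι) :
    A.mul (single i 1) (single j 1) ≠ 0 := by
  intro h
  have hprod := hφ.map_mul (single i 1) (single j 1)
  rw [h, hφ.map_zero] at hprod
  exact (mul_pos (hφ.pos i) (hφ.pos j)).ne hprod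

variable [Fintype ι]

theorem map_pos (hφ : A.IsFPCharacter φ) {c : ι →₀ ℕ} (hc : c ≠ 0) : 0 < φ c := by
  obtain ⟨k, hk⟩ := Finsupp.ne_iff.mp hc
  calc 0 < φ (single k 1) := hφ.pos k
    _ ≤ weight (fun k => φ (single k 1)) c :=
        le_weight_of_ne_zero (fun k => (hφ.pos k).le) hk
    _ = φ c := (Finsupp.map_eq_weight hφ.toAddMonoidHom c).symm

theorem mono (hφ : A.IsFPCharacter φ) : Monotone φ := by
  intro a b hab
  rw [← add_tsub_cancel_of_le hab, hφ.map_add, le_add_iff_nonneg_right]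
  by_cases hc : b - a = 0
  · rw [hc, hφ.map_zero]
  · exact (hφ.map_pos hc).le

theorem eq_of_le_of_map_eq (hφ : A.IsFPCharacter φ) {a b : ι →₀ ℕ} (hab : a ≤ b)
    (h : φ a = φ b) : a = b :=
  Finsupp.eq_of_le_of_map_eq hφ.toAddMonoidHom
    (fun _ hc => not_not.mp fun hne => (hφ.map_pos hne).ne' hc) hab h

theorem one_le_map_single (hA : A.Transitive) (hφ : A.IsFPCharacter φ) (i : ι) :
    1 ≤ φ (single i 1) := by
  have hS : 0 < φ (∑ j, single j 1) :=
    hφ.map_pos (Finsupp.ne_iff.mpr ⟨i, by simp⟩)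
  have hle := hφ.mono (hA.sum_single_le_mul i)
  rw [hφ.map_mul] at hle
  exact le_of_mul_le_mul_right (by rwa [_root_.one_mul]) hS

theorem degree_mul_single_eq_one (hA : A.Transitive) (hφ : A.IsFPCharacter φ) {i : ι}
    (h : φ (single i 1) = 1) (j : ι) : degree (A.mul (single i 1) (single j 1)) = 1 := by
  have hfix : A.mul (single i 1) (∑ j, single j 1) = ∑ j, single j 1 :=
    (hφ.eq_of_le_of_map_eq (hA.sum_single_le_mul i) (by rw [hφ.map_mul, h, _root_.one_mul])).symm
  have hcount : ∑ j, degree (A.mul (single i 1) (single j 1)) = ∑ _j : ι, 1 := by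
    simpa only [A.mul_sum, map_sum, degree_single] using congrArg degree hfix
  have hpos : ∀ j, 1 ≤ degree (A.mul (single i 1) (single j 1)) := fun j =>
    Nat.one_le_iff_ne_zero.mpr ((degree_eq_zero_iff _).not.mpr (hφ.mul_single_ne_zero i j))
  exact ((Finset.sum_eq_sum_iff_of_le fun j _ => hpos j).mp hcount.symm j
    (Finset.mem_univ j)).symm

theorem mul_single_eq_one (hA : A.Transitive) (hφ : A.IsFPCharacter φ) {i j k : ι}
    (h : φ (single i 1) = 1) (hk₁ : single k 1 ≤ A.one)
    (hk : single k 1 ≤ A.mul (single i 1) (single j 1)) :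
    A.mul (single i 1) (single j 1) = A.one := by
  have hunit : single k 1 = A.one := hφ.eq_of_le_of_map_eq hk₁ <|
    le_antisymm (hφ.mono hk₁) (hφ.map_one ▸ hφ.one_le_map_single hA k)
  rw [← hunit]
  exact (Finsupp.eq_of_le_of_map_eq degree (fun c => (degree_eq_zero_iff c).mp) hk
    (by rw [degree_single, hφ.degree_mul_single_eq_one hA h])).symm

theorem map_single_eq_one (hA : A.Transitive) (hφ : A.IsFPCharacter φ) {i j : ι}
    (h : A.mul (single i 1) (single j 1) = A.one) : φ (single i 1) = 1 := by
  have hprod := hφ.map_mul (single i 1) (single j 1)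
  rw [h, hφ.map_one] at hprod
  nlinarith [hφ.one_le_map_single hA i, hφ.one_le_map_single hA j]

end IsFPCharacter

end NSetAlgebra

open NSetAlgebra in
theorem stmt13_general {ι : Type*} [Fintype ι]
    (A : NSetAlgebra ι) (hA : A.Transitive)
    (σ : ι → ι) (hσ : A.IsFusionSemiring σ)
    (φ : (ι →₀ ℕ) → ℝ) (hφ : A.IsFPCharacter φ) (i : ι) :
    φ (Finsupp.single i 1) = 1 ↔
      (A.mul (Finsupp.single i 1) (Finsupp.single (σ i) 1) = A.one ∧
       A.mul (Finsupp.single (σ i) 1) (Finsupp.single i 1) = A.one) := by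
  constructor
  · intro h
    obtain ⟨k, ⟨hk₁, hk⟩, -⟩ := (hσ.dual_iff i (σ i)).mpr rfl
    obtain ⟨k', ⟨hk₁', hk'⟩, -⟩ := (hσ.dual_iff' i (σ i)).mpr rfl
    exact ⟨hφ.mul_single_eq_one hA h hk₁ hk, hφ.op.mul_single_eq_one hA.op h hk₁' hk'⟩
  · rintro ⟨h, -⟩
    exact hφ.map_single_eq_one hA h

open NSetAlgebra in
/-- In a fusion semiring, a simple element has FP dimension 1 iff it is invertible:
`φ(e_i) = 1 ↔ e_i * e_{σ i} = 1 ∧ e_{σ i} * e_i = 1`. -/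
theorem stmt13 {ι : Type*} [Fintype ι] [Nonempty ι]
    (A : NSetAlgebra ι) (hA : A.Transitive)
    (σ : ι → ι) (hσ : A.IsFusionSemiring σ)
    (φ : (ι →₀ ℕ) → ℝ) (hφ : A.IsFPCharacter φ) (i : ι) :
    φ (Finsupp.single i 1) = 1 ↔
      (A.mul (Finsupp.single i 1) (Finsupp.single (σ i) 1) = A.one ∧
       A.mul (Finsupp.single (σ i) 1) (Finsupp.single i 1) = A.one) :=
  stmt13_general A hA σ hσ φ hφ i
end
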